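/- Let matrices B_t and J_t in ℝ^{n×n} and vectors s_t satisfy B_{t+1} = AAA(B_t, J_t, s_t) for t = k, …, k+j, where each s_t is a standard basis vector maximizing ‖(B_t − J_t) e‖ over the standard basis e_1, …, e_n (the greedy choice). Suppose 0 ≤ i < j and s_{k+i} = s_{k+j}. Then for any matrix A ∈ ℝ^{n×n}, ‖B_{k+j} − A‖_F ≤ √n · Σ_{t=k+i}^{k+j−1} ‖(J_t − A) s_{k+i}‖ + 2√n · ‖J_{k+j} − A‖_F ≤ √n · Σ_{t=k+i}^{k+j−1} ‖J_t − A‖_F + 2√n · ‖J_{k+j} − A‖_F. -/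

import Mathlib

open Matrix MeasureTheory ProbabilityTheory Finset

/-- Euclidean norm of a vector in ℝⁿ. -/
noncomputable def enorm' {n : ℕ} (v : Fin n → ℝ) : ℝ := Real.sqrt (∑ i, (v i) ^ 2)

/-- Frobenius norm of a real n×n matrix. -/
noncomputable def frob {n : ℕ} (A : Matrix (Fin n) (Fin n) ℝ) : ℝ :=
  Real.sqrt (∑ i, ∑ j, (A i j) ^ 2)

/-- Spectral (ℓ₂ operator) norm of a real n×n matrix. -/
noncomputable def opNorm' {n : ℕ} (A : Matrix (Fin n) (Fin n) ℝ) : ℝ :=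
  ‖Matrix.toEuclideanCLM (𝕜 := ℝ) A‖

/-- The AAA update: AAA(B,J,s) = B + ((J−B) s sᵀ (J−B)ᵀ / (sᵀ(J−B)ᵀ(J−B)s)) (J−B)
if (J−B)s ≠ 0, and B otherwise. -/
noncomputable def AAAupd {n : ℕ} (B J : Matrix (Fin n) (Fin n) ℝ) (s : Fin n → ℝ) :
    Matrix (Fin n) (Fin n) ℝ :=
  if (J - B).mulVec s = 0 then B
  else B + (((J - B).mulVec s) ⬝ᵥ ((J - B).mulVec s))⁻¹ •
      (Matrix.vecMulVec ((J - B).mulVec s) ((J - B).mulVec s) * (J - B))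

/-- `s` is a standard basis vector maximizing ‖R e_i‖ over the standard basis. -/
noncomputable def IsGreedy {n : ℕ} (R : Matrix (Fin n) (Fin n) ℝ) (s : Fin n → ℝ) : Prop :=
  ∃ i : Fin n, s = Pi.single i 1 ∧
    ∀ j : Fin n, enorm' (R.mulVec (Pi.single j 1)) ≤ enorm' (R.mulVec (Pi.single i 1))

/-- `P` is the orthogonal-projection matrix onto the subspace `V` of ℝⁿ
(symmetric, idempotent, range `V`, identity on `V`). -/
def IsOrthProj {n : ℕ} (P : Matrix (Fin n) (Fin n) ℝ) (V : Submodule ℝ (Fin n → ℝ)) : Prop :=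
  P.IsSymm ∧ P * P = P ∧ (∀ v, P.mulVec v ∈ V) ∧ (∀ v ∈ V, P.mulVec v = v)

/-- Standard Gaussian measure on ℝⁿ: the n-fold product of N(0,1). -/
noncomputable def stdGaussianPi (n : ℕ) : MeasureTheory.Measure (Fin n → ℝ) :=
  MeasureTheory.Measure.pi fun _ => ProbabilityTheory.gaussianReal 0 1

/-! The AAA update sends `v` to `B v` plus the orthogonal projection `P` of `(J - B) v` onto the
line through `(J - B) s`; in particular it agrees with `J` on `s`. Hence
`(AAA(B, J, s) - A) v = (1 - P) (B - A) v + P (J - A) v` has norm at most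
`‖(B - A) v‖ + ‖(J - A) v‖`. Starting from `B_{k+i+1} e = J_{k+i} e` for the repeated direction
`e = s_{k+i} = s_{k+j}`, this bounds `‖(B_{k+j} - A) e‖` by `∑ ‖(J_t - A) e‖`. The greedy choice
makes `e` pick out the largest column of `B_{k+j} - J_{k+j}`, so
`‖B_{k+j} - J_{k+j}‖_F ≤ √n ‖(B_{k+j} - J_{k+j}) e‖`, and the triangle inequality concludes. -/

open WithLp

section Norms

variable {n : ℕ}

lemma enorm'_eq_norm (v : Fin n → ℝ) : enorm' v = ‖toLp 2 v‖ := by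
  simp [enorm', EuclideanSpace.norm_eq]

lemma enorm'_nonneg (v : Fin n → ℝ) : 0 ≤ enorm' v := Real.sqrt_nonneg _

lemma enorm'_sub_le (u v : Fin n → ℝ) : enorm' (u - v) ≤ enorm' u + enorm' v := by
  simpa only [enorm'_eq_norm, toLp_sub] using norm_sub_le (toLp 2 u) (toLp 2 v)

lemma frob_nonneg (M : Matrix (Fin n) (Fin n) ℝ) : 0 ≤ frob M := Real.sqrt_nonneg _

section Frobenius

attribute [local instance] Matrix.frobeniusNormedAddCommGroup

lemma frob_eq_norm (M : Matrix (Fin n) (Fin n) ℝ) : frob M = ‖M‖ := by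
  simp [frob, Matrix.frobenius_norm_def, Real.sqrt_eq_rpow]

lemma frob_add_le (M N : Matrix (Fin n) (Fin n) ℝ) : frob (M + N) ≤ frob M + frob N := by
  simpa only [frob_eq_norm] using norm_add_le M N

end Frobenius

lemma sq_frob_eq_sum_sq_enorm'_col (M : Matrix (Fin n) (Fin n) ℝ) :
    frob M ^ 2 = ∑ m, enorm' (M *ᵥ Pi.single m 1) ^ 2 := by
  rw [frob, Real.sq_sqrt (by positivity), Finset.sum_comm]
  refine Finset.sum_congr rfl fun m _ => ?_
  rw [enorm', Real.sq_sqrt (by positivity), mulVec_single_one]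
  rfl

lemma enorm'_mulVec_single_le_frob (M : Matrix (Fin n) (Fin n) ℝ) (m : Fin n) :
    enorm' (M *ᵥ Pi.single m 1) ≤ frob M := by
  rw [← sq_le_sq₀ (enorm'_nonneg _) (frob_nonneg _), sq_frob_eq_sum_sq_enorm'_col]
  exact Finset.single_le_sum (fun m _ => sq_nonneg (enorm' (M *ᵥ Pi.single m 1)))
    (Finset.mem_univ m)

lemma frob_le_sqrt_mul_of_enorm'_col_le (M : Matrix (Fin n) (Fin n) ℝ) {c : ℝ} (hc : 0 ≤ c)
    (h : ∀ m, enorm' (M *ᵥ Pi.single m 1) ≤ c) : frob M ≤ √n * c := by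
  rw [← sq_le_sq₀ (frob_nonneg _) (by positivity), sq_frob_eq_sum_sq_enorm'_col, mul_pow,
    Real.sq_sqrt n.cast_nonneg]
  calc ∑ m, enorm' (M *ᵥ Pi.single m 1) ^ 2 ≤ ∑ _m : Fin n, c ^ 2 :=
        Finset.sum_le_sum fun m _ => pow_le_pow_left₀ (enorm'_nonneg _) (h m) 2
    _ = n * c ^ 2 := by simp

lemma IsGreedy.frob_le {R : Matrix (Fin n) (Fin n) ℝ} {s : Fin n → ℝ} (h : IsGreedy R s) :
    frob R ≤ √n * enorm' (R *ᵥ s) := by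
  obtain ⟨m, rfl, hmax⟩ := h
  exact frob_le_sqrt_mul_of_enorm'_col_le R (enorm'_nonneg _) hmax

end Norms

lemma norm_sub_starProjection_add_starProjection_le {𝕜 E : Type*} [RCLike 𝕜]
    [NormedAddCommGroup E] [InnerProductSpace 𝕜 E] (K : Submodule 𝕜 E)
    [K.HasOrthogonalProjection] (w z : E) :
    ‖w - K.starProjection w + K.starProjection z‖ ≤ ‖w‖ + ‖z‖ := by
  rw [← Submodule.starProjection_orthogonal_val]
  exact (norm_add_le _ _).trans
    (add_le_add (Kᗮ.norm_starProjection_apply_le w) (K.norm_starProjection_apply_le z))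

section AAA

variable {n : ℕ}

lemma AAAupd_eq (B J : Matrix (Fin n) (Fin n) ℝ) (s : Fin n → ℝ) :
    AAAupd B J s = B + (((J - B) *ᵥ s) ⬝ᵥ ((J - B) *ᵥ s))⁻¹ •
      (vecMulVec ((J - B) *ᵥ s) ((J - B) *ᵥ s) * (J - B)) := by
  unfold AAAupd
  split_ifs with h <;> simp [h]

lemma toLp_AAAupd_mulVec (B J : Matrix (Fin n) (Fin n) ℝ) (s v : Fin n → ℝ) :
    toLp 2 (AAAupd B J s *ᵥ v) = toLp 2 (B *ᵥ v) +
      (ℝ ∙ toLp 2 ((J - B) *ᵥ s)).starProjection (toLp 2 ((J - B) *ᵥ v)) := by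
  rw [AAAupd_eq, add_mulVec, smul_mulVec, ← mulVec_mulVec, vecMulVec_mulVec, op_smul_eq_smul,
    smul_smul, Submodule.starProjection_singleton, RCLike.ofReal_real_eq_id, id,
    ← real_inner_self_eq_norm_sq, EuclideanSpace.inner_toLp_toLp, EuclideanSpace.inner_toLp_toLp]
  simp only [toLp_add, toLp_smul, star_trivial, dotProduct_comm, div_eq_inv_mul]

lemma AAAupd_mulVec_self (B J : Matrix (Fin n) (Fin n) ℝ) (s : Fin n → ℝ) :
    AAAupd B J s *ᵥ s = J *ᵥ s := by
  have h := toLp_AAAupd_mulVec B J s s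
  rw [Submodule.starProjection_eq_self_iff.2 (Submodule.mem_span_singleton_self _), ← toLp_add,
    ← add_mulVec, add_sub_cancel] at h
  exact (toLp_injective 2).eq_iff.1 h

lemma enorm'_AAAupd_sub_mulVec_le (B J A : Matrix (Fin n) (Fin n) ℝ) (s v : Fin n → ℝ) :
    enorm' ((AAAupd B J s - A) *ᵥ v) ≤ enorm' ((B - A) *ᵥ v) + enorm' ((J - A) *ᵥ v) := by
  set K := ℝ ∙ toLp 2 ((J - B) *ᵥ s)
  have h : toLp 2 ((AAAupd B J s - A) *ᵥ v) =
      toLp 2 ((B - A) *ᵥ v) - K.starProjection (toLp 2 ((B - A) *ᵥ v)) +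
        K.starProjection (toLp 2 ((J - A) *ᵥ v)) := by
    have hJB : toLp 2 ((J - B) *ᵥ v) = toLp 2 ((J - A) *ᵥ v) - toLp 2 ((B - A) *ᵥ v) := by
      simp only [sub_mulVec, toLp_sub]
      abel
    rw [sub_mulVec, toLp_sub, toLp_AAAupd_mulVec, hJB, map_sub, sub_mulVec B, toLp_sub]
    abel
  simp only [enorm'_eq_norm, h]
  exact norm_sub_starProjection_add_starProjection_le K _ _

lemma enorm'_AAAupd_iterate_sub_mulVec_le (B J : ℕ → Matrix (Fin n) (Fin n) ℝ)
    (s : ℕ → Fin n → ℝ) (A : Matrix (Fin n) (Fin n) ℝ) {a b : ℕ} (hab : a < b)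
    (hupd : ∀ t, a ≤ t → t < b → B (t + 1) = AAAupd (B t) (J t) (s t)) :
    enorm' ((B b - A) *ᵥ s a) ≤ ∑ t ∈ Finset.Ico a b, enorm' ((J t - A) *ᵥ s a) := by
  induction b, hab using Nat.le_induction with
  | base =>
    rw [Nat.Ico_succ_singleton, Finset.sum_singleton, hupd a le_rfl a.lt_succ_self, sub_mulVec,
      AAAupd_mulVec_self, ← sub_mulVec]
  | succ b hab ih =>
    rw [hupd b (by omega) (by omega), Finset.sum_Ico_succ_top (by omega)]
    exact (enorm'_AAAupd_sub_mulVec_le _ _ _ _ _).trans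
      (add_le_add_left (ih fun t _ _ => hupd t (by omega) (by omega)) _)

end AAA

theorem stmt_19 {n : ℕ} (B Jm : ℕ → Matrix (Fin n) (Fin n) ℝ) (s : ℕ → Fin n → ℝ)
    (k i j : ℕ) (hij : i < j)
    (hupd : ∀ t, k ≤ t → t ≤ k + j → B (t + 1) = AAAupd (B t) (Jm t) (s t))
    (hgreedy : ∀ t, k ≤ t → t ≤ k + j → IsGreedy (B t - Jm t) (s t))
    (hss : s (k + i) = s (k + j))
    (A : Matrix (Fin n) (Fin n) ℝ) :
    frob (B (k + j) - A) ≤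
      Real.sqrt n * (∑ t ∈ Finset.Ico (k + i) (k + j), enorm' ((Jm t - A).mulVec (s (k + i)))) +
        2 * Real.sqrt n * frob (Jm (k + j) - A) ∧
    Real.sqrt n * (∑ t ∈ Finset.Ico (k + i) (k + j), enorm' ((Jm t - A).mulVec (s (k + i)))) +
        2 * Real.sqrt n * frob (Jm (k + j) - A) ≤
      Real.sqrt n * (∑ t ∈ Finset.Ico (k + i) (k + j), frob (Jm t - A)) +
        2 * Real.sqrt n * frob (Jm (k + j) - A) := by
  have hgr : IsGreedy (B (k + j) - Jm (k + j)) (s (k + j)) := hgreedy (k + j) (by omega) le_rfl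
  have ⟨m, hm, _⟩ := hgr
  have hs : s (k + i) = Pi.single m 1 := hss.trans hm
  set S := ∑ t ∈ Finset.Ico (k + i) (k + j), enorm' ((Jm t - A) *ᵥ s (k + i))
  set F := frob (Jm (k + j) - A)
  have hS : enorm' ((B (k + j) - A) *ᵥ s (k + j)) ≤ S :=
    hss ▸ enorm'_AAAupd_iterate_sub_mulVec_le B Jm s A (by omega)
      fun t _ _ => hupd t (by omega) (by omega)
  have hF : enorm' ((Jm (k + j) - A) *ᵥ s (k + j)) ≤ F := hm ▸ enorm'_mulVec_single_le_frob _ m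
  have hcol : enorm' ((B (k + j) - Jm (k + j)) *ᵥ s (k + j)) ≤ S + F := by
    rw [← sub_sub_sub_cancel_right _ _ A, sub_mulVec]
    exact (enorm'_sub_le _ _).trans (add_le_add hS hF)
  have hsqrt : 1 ≤ √(n : ℝ) := Real.one_le_sqrt.2 (by exact_mod_cast m.pos)
  have hsum : S ≤ ∑ t ∈ Finset.Ico (k + i) (k + j), frob (Jm t - A) :=
    Finset.sum_le_sum fun t _ => hs ▸ enorm'_mulVec_single_le_frob _ m
  refine ⟨?_, by gcongr⟩
  calc frob (B (k + j) - A) ≤ frob (B (k + j) - Jm (k + j)) + F := by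
        simpa only [sub_add_sub_cancel] using frob_add_le (B (k + j) - Jm (k + j)) (Jm (k + j) - A)
    _ ≤ √n * (S + F) + F := by gcongr; exact hgr.frob_le.trans (by gcongr)
    _ ≤ √n * S + 2 * √n * F := by nlinarith [frob_nonneg (Jm (k + j) - A)]
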